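/- Let S ⊆ ℝ² be an open set and let u : ℝ² → ℝ³ be smooth on S with ∂₁u(x) and ∂₂u(x) linearly independent at every x ∈ S. Define g_{ij} = ∂ᵢu·∂ⱼu with inverse (g^{ij}), n = (∂₁u × ∂₂u)/|∂₁u × ∂₂u|, h_{ij} = n·∂ᵢ∂ⱼu and Γ^k_{ij} = ½ g^{kl}(∂ⱼg_{il} + ∂ᵢg_{jl} − ∂_l g_{ij}). Let V¹, V², Φ be smooth real functions on S and set τ = V^k ∂_k u + Φ n. Then for all i, j ∈ {1,2}, on S: n·(∂ᵢ∂ⱼτ − Γ^m_{ij}∂_m τ) = V^k(∂_k h_{ij} − Γ^l_{ki}h_{lj} − Γ^l_{kj}h_{il}) + h_{ik}(∂ⱼV^k + Γ^k_{jl}V^l) + h_{jk}(∂ᵢV^k + Γ^k_{il}V^l) + ∂ᵢ∂ⱼΦ − Γ^k_{ij}∂_k Φ − Φ g^{kl}h_{ik}h_{jl}. -/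

import Mathlib

open Matrix Set

open scoped ContDiff

noncomputable section

/-- The `i`-th partial derivative of a map `ℝ² → ℝ³`. -/
def pdv (i : Fin 2) (f : (Fin 2 → ℝ) → (Fin 3 → ℝ)) (x : Fin 2 → ℝ) : Fin 3 → ℝ :=
  fderiv ℝ f x (Pi.single i 1)

/-- The `i`-th partial derivative of a scalar function on `ℝ²`. -/
def pds (i : Fin 2) (f : (Fin 2 → ℝ) → ℝ) (x : Fin 2 → ℝ) : ℝ :=
  fderiv ℝ f x (Pi.single i 1)

/-- Euclidean norm on `ℝ³`. -/
def norm3 (a : Fin 3 → ℝ) : ℝ := Real.sqrt (a ⬝ᵥ a)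

/-- The induced metric `g_{ij} = ∂ᵢu·∂ⱼu` of `u`. -/
def gmat (u : (Fin 2 → ℝ) → (Fin 3 → ℝ)) (x : Fin 2 → ℝ) : Matrix (Fin 2) (Fin 2) ℝ :=
  Matrix.of fun i j => pdv i u x ⬝ᵥ pdv j u x

/-- The inverse metric `(g^{ij})`. -/
def ginv (u : (Fin 2 → ℝ) → (Fin 3 → ℝ)) (x : Fin 2 → ℝ) : Matrix (Fin 2) (Fin 2) ℝ :=
  (gmat u x)⁻¹

/-- The unit normal `n = (∂₁u × ∂₂u)/|∂₁u × ∂₂u|` of `u`. -/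
def nrm (u : (Fin 2 → ℝ) → (Fin 3 → ℝ)) (x : Fin 2 → ℝ) : Fin 3 → ℝ :=
  (norm3 (pdv 0 u x ⨯₃ pdv 1 u x))⁻¹ • (pdv 0 u x ⨯₃ pdv 1 u x)

/-- The second fundamental form `h_{ij} = n·∂ᵢ∂ⱼu` of `u`. -/
def sff (u : (Fin 2 → ℝ) → (Fin 3 → ℝ)) (x : Fin 2 → ℝ) (i j : Fin 2) : ℝ :=
  nrm u x ⬝ᵥ pdv i (pdv j u) x

/-- The Christoffel symbols `Γ^k_{ij} = ½ g^{kl}(∂ⱼg_{il} + ∂ᵢg_{jl} − ∂_l g_{ij})` of `u`. -/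
def Gam (u : (Fin 2 → ℝ) → (Fin 3 → ℝ)) (x : Fin 2 → ℝ) (k i j : Fin 2) : ℝ :=
  (1/2) * ∑ l, ginv u x k l *
    (pds j (fun y => gmat u y i l) x + pds i (fun y => gmat u y j l) x
      - pds l (fun y => gmat u y i j) x)


section Found

variable {f g : (Fin 2 → ℝ) → ℝ} {F G : (Fin 2 → ℝ) → (Fin 3 → ℝ)} {x : Fin 2 → ℝ} {i : Fin 2}

lemma pds_congr {S : Set (Fin 2 → ℝ)} (hS : IsOpen S) (hx : x ∈ S)
    (h : ∀ y ∈ S, f y = g y) : pds i f x = pds i g x := by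
  unfold pds
  rw [Filter.EventuallyEq.fderiv_eq (Filter.eventually_of_mem (hS.mem_nhds hx) h)]

lemma pdv_congr {S : Set (Fin 2 → ℝ)} (hS : IsOpen S) (hx : x ∈ S)
    (h : ∀ y ∈ S, F y = G y) : pdv i F x = pdv i G x := by
  unfold pdv
  rw [Filter.EventuallyEq.fderiv_eq (Filter.eventually_of_mem (hS.mem_nhds hx) h)]

lemma pds_add (hf : DifferentiableAt ℝ f x) (hg : DifferentiableAt ℝ g x) :
    pds i (fun y => f y + g y) x = pds i f x + pds i g x := by
  unfold pds; rw [fderiv_fun_add hf hg]; rfl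

lemma pds_mul (hf : DifferentiableAt ℝ f x) (hg : DifferentiableAt ℝ g x) :
    pds i (fun y => f y * g y) x = pds i f x * g x + f x * pds i g x := by
  unfold pds; rw [fderiv_fun_mul hf hg]; simp; ring

lemma pds_const (c : ℝ) : pds i (fun _ => c) x = 0 := by
  unfold pds; simp

lemma pds_sum {ι : Type*} (s : Finset ι) (f : ι → (Fin 2 → ℝ) → ℝ)
    (hf : ∀ k ∈ s, DifferentiableAt ℝ (f k) x) :
    pds i (fun y => ∑ k ∈ s, f k y) x = ∑ k ∈ s, pds i (f k) x := by
  unfold pds; rw [fderiv_fun_sum hf]; simp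

lemma pdv_apply (hf : DifferentiableAt ℝ F x) (c : Fin 3) :
    pdv i F x c = pds i (fun y => F y c) x := by
  unfold pdv pds
  have : fderiv ℝ (fun y => F y c) x
      = (ContinuousLinearMap.proj (R := ℝ) (φ := fun _ : Fin 3 => ℝ) c).comp (fderiv ℝ F x) :=
    ((ContinuousLinearMap.proj (R := ℝ) (φ := fun _ : Fin 3 => ℝ) c).hasFDerivAt.comp x
      hf.hasFDerivAt).fderiv
  rw [this]; rfl

lemma diffAt_comp (hf : DifferentiableAt ℝ F x) (c : Fin 3) :
    DifferentiableAt ℝ (fun y => F y c) x :=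
  ((ContinuousLinearMap.proj (R := ℝ) (φ := fun _ : Fin 3 => ℝ) c).differentiableAt).comp x hf

lemma pdv_add (hf : DifferentiableAt ℝ F x) (hg : DifferentiableAt ℝ G x) :
    pdv i (fun y => F y + G y) x = pdv i F x + pdv i G x := by
  unfold pdv; rw [fderiv_fun_add hf hg]; rfl

lemma pdv_smul (hf : DifferentiableAt ℝ f x) (hF : DifferentiableAt ℝ F x) :
    pdv i (fun y => f y • F y) x = pds i f x • F x + f x • pdv i F x := by
  unfold pdv pds; rw [fderiv_fun_smul hf hF]; simp [add_comm]

lemma pdv_sum {ι : Type*} (s : Finset ι) (F : ι → (Fin 2 → ℝ) → (Fin 3 → ℝ))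
    (hf : ∀ k ∈ s, DifferentiableAt ℝ (F k) x) :
    pdv i (fun y => ∑ k ∈ s, F k y) x = ∑ k ∈ s, pdv i (F k) x := by
  unfold pdv; rw [fderiv_fun_sum hf]; simp

lemma pds_dot (hf : DifferentiableAt ℝ F x) (hg : DifferentiableAt ℝ G x) :
    pds i (fun y => F y ⬝ᵥ G y) x = pdv i F x ⬝ᵥ G x + F x ⬝ᵥ pdv i G x := by
  have : (fun y => F y ⬝ᵥ G y) = fun y => ∑ c, (fun y => F y c * G y c) y := by
    funext y; simp [dotProduct]
  rw [this, pds_sum _ (fun c y => F y c * G y c) (fun c _ => ((diffAt_comp hf c).mul (diffAt_comp hg c)))]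
  simp only [dotProduct]
  rw [← Finset.sum_add_distrib]
  refine Finset.sum_congr rfl fun c _ => ?_
  rw [pds_mul (diffAt_comp hf c) (diffAt_comp hg c), pdv_apply hf c, pdv_apply hg c]

end Found
section Sm
variable {S : Set (Fin 2 → ℝ)} {f g : (Fin 2 → ℝ) → ℝ} {F : (Fin 2 → ℝ) → (Fin 3 → ℝ)}
  {x : Fin 2 → ℝ} {i : Fin 2}

lemma diffAt_of_sm (hS : IsOpen S) (hf : ContDiffOn ℝ ∞ f S) (hx : x ∈ S) :
    DifferentiableAt ℝ f x :=
  (hf.differentiableOn (by simp)).differentiableAt (hS.mem_nhds hx)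

lemma diffAt_of_smF (hS : IsOpen S) (hf : ContDiffOn ℝ ∞ F S) (hx : x ∈ S) :
    DifferentiableAt ℝ F x :=
  (hf.differentiableOn (by simp)).differentiableAt (hS.mem_nhds hx)

lemma sm_pds (hS : IsOpen S) (hf : ContDiffOn ℝ ∞ f S) :
    ContDiffOn ℝ ∞ (pds i f) S := by
  have h1 : ContDiffOn ℝ ∞ (fderiv ℝ f) S := hf.fderiv_of_isOpen hS (by simp)
  exact (ContinuousLinearMap.apply ℝ ℝ (Pi.single i 1 : Fin 2 → ℝ)).contDiff.comp_contDiffOn h1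

lemma sm_pdv_comp (hS : IsOpen S) (hf : ContDiffOn ℝ ∞ F S) (c : Fin 3) :
    ContDiffOn ℝ ∞ (fun y => pdv i F y c) S := by
  have h1 : ContDiffOn ℝ ∞ (fderiv ℝ F) S := hf.fderiv_of_isOpen hS (by simp)
  exact ((ContinuousLinearMap.proj (R := ℝ) (φ := fun _ : Fin 3 => ℝ) c).comp
    (ContinuousLinearMap.apply ℝ (Fin 3 → ℝ) (Pi.single i 1 : Fin 2 → ℝ))).contDiff.comp_contDiffOn h1

lemma sm_pdv (hS : IsOpen S) (hf : ContDiffOn ℝ ∞ F S) :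
    ContDiffOn ℝ ∞ (pdv i F) S := by
  have h1 : ContDiffOn ℝ ∞ (fderiv ℝ F) S := hf.fderiv_of_isOpen hS (by simp)
  exact (ContinuousLinearMap.apply ℝ (Fin 3 → ℝ) (Pi.single i 1 : Fin 2 → ℝ)).contDiff.comp_contDiffOn h1

lemma sm_comp (hf : ContDiffOn ℝ ∞ F S) (c : Fin 3) :
    ContDiffOn ℝ ∞ (fun y => F y c) S :=
  (ContinuousLinearMap.proj (R := ℝ) (φ := fun _ : Fin 3 => ℝ) c).contDiff.comp_contDiffOn hf

lemma sm_dot {G : (Fin 2 → ℝ) → (Fin 3 → ℝ)} (hf : ContDiffOn ℝ ∞ F S)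
    (hg : ContDiffOn ℝ ∞ G S) : ContDiffOn ℝ ∞ (fun y => F y ⬝ᵥ G y) S := by
  have : (fun y => F y ⬝ᵥ G y) = fun y => ∑ c, F y c * G y c := by
    funext y; simp [dotProduct]
  rw [this]
  exact ContDiffOn.sum fun c _ => (sm_comp hf c).mul (sm_comp hg c)

end Sm
section Geom

variable {S : Set (Fin 2 → ℝ)} {u : (Fin 2 → ℝ) → (Fin 3 → ℝ)} {x : Fin 2 → ℝ}

lemma dot_self_nonneg (v : Fin 3 → ℝ) : 0 ≤ v ⬝ᵥ v :=
  Finset.sum_nonneg fun c _ => mul_self_nonneg _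

lemma dot_self_pos {v : Fin 3 → ℝ} (hv : v ≠ 0) : 0 < v ⬝ᵥ v :=
  lt_of_le_of_ne (dot_self_nonneg v) fun h => hv (dotProduct_self_eq_zero.1 h.symm)

lemma cross_self_dot :
    (pdv 0 u x ⨯₃ pdv 1 u x) ⬝ᵥ (pdv 0 u x ⨯₃ pdv 1 u x) = (gmat u x).det := by
  rw [cross_dot_cross, Matrix.det_fin_two]
  simp [gmat]

lemma detg_pos (hli : LinearIndependent ℝ ![pdv 0 u x, pdv 1 u x]) :
    0 < (gmat u x).det := by
  have hP0 : pdv 0 u x ≠ 0 := by simpa using hli.ne_zero 0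
  have ha : 0 < pdv 0 u x ⬝ᵥ pdv 0 u x := dot_self_pos hP0
  have hw : (pdv 0 u x ⬝ᵥ pdv 0 u x) • pdv 1 u x
      - (pdv 0 u x ⬝ᵥ pdv 1 u x) • pdv 0 u x ≠ 0 := by
    intro h
    have hcomb : (-(pdv 0 u x ⬝ᵥ pdv 1 u x)) • pdv 0 u x
        + (pdv 0 u x ⬝ᵥ pdv 0 u x) • pdv 1 u x = 0 := by
      rw [neg_smul, add_comm, ← sub_eq_add_neg]; exact h
    have := Fintype.linearIndependent_iff.1 hli
      ![-(pdv 0 u x ⬝ᵥ pdv 1 u x), pdv 0 u x ⬝ᵥ pdv 0 u x]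
      (by simpa [Fin.sum_univ_two] using hcomb) 1
    simp only [Matrix.cons_val_one, Matrix.head_cons] at this
    exact absurd this (ne_of_gt ha)
  have hww := dot_self_pos hw
  have hexp : ((pdv 0 u x ⬝ᵥ pdv 0 u x) • pdv 1 u x
      - (pdv 0 u x ⬝ᵥ pdv 1 u x) • pdv 0 u x) ⬝ᵥ
      ((pdv 0 u x ⬝ᵥ pdv 0 u x) • pdv 1 u x - (pdv 0 u x ⬝ᵥ pdv 1 u x) • pdv 0 u x)
      = (pdv 0 u x ⬝ᵥ pdv 0 u x) *
        ((pdv 0 u x ⬝ᵥ pdv 0 u x) * (pdv 1 u x ⬝ᵥ pdv 1 u x)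
          - (pdv 0 u x ⬝ᵥ pdv 1 u x) * (pdv 0 u x ⬝ᵥ pdv 1 u x)) := by
    simp only [dotProduct, Fin.sum_univ_three, Pi.sub_apply, Pi.smul_apply, smul_eq_mul]
    ring
  have hdet : (gmat u x).det = (pdv 0 u x ⬝ᵥ pdv 0 u x) * (pdv 1 u x ⬝ᵥ pdv 1 u x)
      - (pdv 0 u x ⬝ᵥ pdv 1 u x) * (pdv 0 u x ⬝ᵥ pdv 1 u x) := by
    rw [Matrix.det_fin_two]
    simp only [gmat, Matrix.of_apply, dotProduct, Fin.sum_univ_three]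
    ring
  rw [hexp] at hww
  rw [hdet]
  nlinarith [hww, ha]

lemma crossdot_pos (hli : LinearIndependent ℝ ![pdv 0 u x, pdv 1 u x]) :
    0 < (pdv 0 u x ⨯₃ pdv 1 u x) ⬝ᵥ (pdv 0 u x ⨯₃ pdv 1 u x) := by
  rw [cross_self_dot]; exact detg_pos hli

lemma norm3_cross_pos (hli : LinearIndependent ℝ ![pdv 0 u x, pdv 1 u x]) :
    0 < norm3 (pdv 0 u x ⨯₃ pdv 1 u x) := by
  rw [norm3]; exact Real.sqrt_pos.2 (crossdot_pos hli)

lemma nrm_dot_self (hli : LinearIndependent ℝ ![pdv 0 u x, pdv 1 u x]) :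
    nrm u x ⬝ᵥ nrm u x = 1 := by
  have h1 := crossdot_pos hli
  rw [nrm, smul_dotProduct, dotProduct_smul, smul_eq_mul, smul_eq_mul,
    ← mul_assoc, ← mul_inv, norm3, Real.mul_self_sqrt (le_of_lt h1)]
  exact inv_mul_cancel₀ (ne_of_gt h1)

lemma nrm_dot_pdv (k : Fin 2) : nrm u x ⬝ᵥ pdv k u x = 0 := by
  have h0 : (pdv 0 u x ⨯₃ pdv 1 u x) ⬝ᵥ pdv 0 u x = 0 := by
    rw [dotProduct_comm]; exact dot_self_cross _ _
  have h1 : (pdv 0 u x ⨯₃ pdv 1 u x) ⬝ᵥ pdv 1 u x = 0 := by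
    rw [dotProduct_comm]; exact dot_cross_self _ _
  rw [nrm, smul_dotProduct, smul_eq_mul]
  fin_cases k <;> simp_all

end Geom
section Geom2

variable {S : Set (Fin 2 → ℝ)} {u : (Fin 2 → ℝ) → (Fin 3 → ℝ)} {x : Fin 2 → ℝ}

lemma sm_nrm (hS : IsOpen S) (hu : ContDiffOn ℝ ∞ u S)
    (himm : ∀ y ∈ S, LinearIndependent ℝ ![pdv 0 u y, pdv 1 u y]) :
    ContDiffOn ℝ ∞ (nrm u) S := by
  have hCr : ContDiffOn ℝ ∞ (fun y => pdv 0 u y ⨯₃ pdv 1 u y) S := by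
    rw [contDiffOn_pi]
    intro c
    fin_cases c <;> simp only [cross_apply, Matrix.cons_val_zero, Matrix.cons_val_one,
      Matrix.head_cons, Matrix.cons_val_two, Matrix.tail_cons] <;>
      exact ((sm_pdv_comp hS hu _).mul (sm_pdv_comp hS hu _)).sub
        ((sm_pdv_comp hS hu _).mul (sm_pdv_comp hS hu _))
  have hq : ContDiffOn ℝ ∞
      (fun y => (pdv 0 u y ⨯₃ pdv 1 u y) ⬝ᵥ (pdv 0 u y ⨯₃ pdv 1 u y)) S := sm_dot hCr hCr
  have hinv : ContDiffOn ℝ ∞ (fun y => (norm3 (pdv 0 u y ⨯₃ pdv 1 u y))⁻¹) S := by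
    intro y hy
    have hpos := crossdot_pos (himm y hy)
    exact (((hq y hy).sqrt (ne_of_gt hpos)).inv
      (ne_of_gt (Real.sqrt_pos.2 hpos)))
  exact hinv.smul hCr

lemma g_ginv (hli : LinearIndependent ℝ ![pdv 0 u x, pdv 1 u x]) (b c : Fin 2) :
    (∑ a, gmat u x b a * ginv u x a c) = if b = c then 1 else 0 := by
  have h := Matrix.mul_nonsing_inv (gmat u x)
    (isUnit_iff_ne_zero.2 (ne_of_gt (detg_pos hli)))
  have := congrFun (congrFun h b) c
  rw [Matrix.mul_apply] at this
  rw [show (ginv u x : Matrix (Fin 2) (Fin 2) ℝ) = (gmat u x)⁻¹ from rfl]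
  rw [this, Matrix.one_apply]

lemma gmat_symm (a b : Fin 2) : gmat u x a b = gmat u x b a :=
  show pdv a u x ⬝ᵥ pdv b u x = pdv b u x ⬝ᵥ pdv a u x from dotProduct_comm _ _

lemma ginv_symm (a b : Fin 2) : ginv u x a b = ginv u x b a := by
  have hsym : (gmat u x)ᵀ = gmat u x := by
    ext i j; exact gmat_symm j i
  have := Matrix.transpose_nonsing_inv (gmat u x)
  rw [hsym] at this
  have h2 : ginv u x = (ginv u x)ᵀ := this.symm
  conv_lhs => rw [h2]
  simp [Matrix.transpose_apply]

lemma li3 (hli : LinearIndependent ℝ ![pdv 0 u x, pdv 1 u x]) :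
    LinearIndependent ℝ ![pdv 0 u x, pdv 1 u x, nrm u x] := by
  rw [Fintype.linearIndependent_iff]
  intro c hc
  have hsum : c 0 • pdv 0 u x + c 1 • pdv 1 u x + c 2 • nrm u x = 0 := by
    simpa [Fin.sum_univ_three] using hc
  have h2 : c 2 = 0 := by
    have hdot : nrm u x ⬝ᵥ (c 0 • pdv 0 u x + c 1 • pdv 1 u x + c 2 • nrm u x) = c 2 := by
      rw [dotProduct_add, dotProduct_add, dotProduct_smul,
        dotProduct_smul, dotProduct_smul, nrm_dot_self hli,
        nrm_dot_pdv, nrm_dot_pdv]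
      simp
    rw [← hdot, hsum, dotProduct_zero]
  have h01 := Fintype.linearIndependent_iff.1 hli ![c 0, c 1] (by
    have : c 0 • pdv 0 u x + c 1 • pdv 1 u x = 0 := by
      rw [h2] at hsum; simpa using hsum
    simpa [Fin.sum_univ_two] using this)
  intro i; fin_cases i
  · simpa using h01 0
  · simpa using h01 1
  · exact h2

lemma expand3 (hli : LinearIndependent ℝ ![pdv 0 u x, pdv 1 u x]) (w : Fin 3 → ℝ) :
    w = (w ⬝ᵥ nrm u x) • nrm u x
      + ∑ a, (∑ b, ginv u x a b * (w ⬝ᵥ pdv b u x)) • pdv a u x := by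
  set z := w - ((w ⬝ᵥ nrm u x) • nrm u x
      + ∑ a, (∑ b, ginv u x a b * (w ⬝ᵥ pdv b u x)) • pdv a u x) with hz
  suffices hz0 : z = 0 by
    have := sub_eq_zero.1 hz0; linear_combination (norm := module) this
  have hNz : nrm u x ⬝ᵥ z = 0 := by
    rw [hz]
    simp only [Fin.sum_univ_two, dotProduct_sub, dotProduct_add,
      dotProduct_smul, smul_eq_mul, nrm_dot_self hli, nrm_dot_pdv]
    rw [dotProduct_comm]
    ring
  have hPz : ∀ b : Fin 2, pdv b u x ⬝ᵥ z = 0 := by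
    have e00 : gmat u x 0 0 * ginv u x 0 0 + gmat u x 0 1 * ginv u x 1 0 = 1 := by
      simpa [Fin.sum_univ_two] using g_ginv (x := x) hli 0 0
    have e01 : gmat u x 0 0 * ginv u x 0 1 + gmat u x 0 1 * ginv u x 1 1 = 0 := by
      simpa [Fin.sum_univ_two] using g_ginv (x := x) hli 0 1
    have e10 : gmat u x 1 0 * ginv u x 0 0 + gmat u x 1 1 * ginv u x 1 0 = 0 := by
      simpa [Fin.sum_univ_two] using g_ginv (x := x) hli 1 0
    have e11 : gmat u x 1 0 * ginv u x 0 1 + gmat u x 1 1 * ginv u x 1 1 = 1 := by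
      simpa [Fin.sum_univ_two] using g_ginv (x := x) hli 1 1
    have hg : ∀ a b : Fin 2, pdv b u x ⬝ᵥ pdv a u x = gmat u x b a := fun a b => rfl
    have key : ∀ b : Fin 2, pdv b u x ⬝ᵥ z
        = w ⬝ᵥ pdv b u x
          - ((ginv u x 0 0 * (w ⬝ᵥ pdv 0 u x) + ginv u x 0 1 * (w ⬝ᵥ pdv 1 u x))
              * gmat u x b 0
            + (ginv u x 1 0 * (w ⬝ᵥ pdv 0 u x) + ginv u x 1 1 * (w ⬝ᵥ pdv 1 u x))
              * gmat u x b 1) := by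
      intro b
      have hbN : pdv b u x ⬝ᵥ nrm u x = 0 := by
        rw [dotProduct_comm]; exact nrm_dot_pdv b
      rw [hz]
      simp only [Fin.sum_univ_two]
      rw [dotProduct_sub, dotProduct_add, dotProduct_add,
        dotProduct_smul, dotProduct_smul, dotProduct_smul,
        hbN, hg 0 b, hg 1 b, dotProduct_comm (pdv b u x) w]
      simp only [smul_eq_mul, Fin.sum_univ_two]
      ring
    intro b
    fin_cases b
    · show pdv 0 u x ⬝ᵥ z = 0
      rw [key 0]
      linear_combination (-(w ⬝ᵥ pdv 0 u x)) * e00 - (w ⬝ᵥ pdv 1 u x) * e01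
    · show pdv 1 u x ⬝ᵥ z = 0
      rw [key 1]
      linear_combination (-(w ⬝ᵥ pdv 0 u x)) * e10 - (w ⬝ᵥ pdv 1 u x) * e11
  have htop := (li3 hli).span_eq_top_of_card_eq_finrank
    (by simp [Module.finrank_fintype_fun_eq_card])
  have hzmem : z ∈ Submodule.span ℝ (Set.range ![pdv 0 u x, pdv 1 u x, nrm u x]) := by
    rw [htop]; trivial
  obtain ⟨c, hc⟩ := Submodule.mem_span_range_iff_exists_fun ℝ |>.1 hzmem
  have hzz : z ⬝ᵥ z = 0 := by
    rw [show z ⬝ᵥ z = (∑ i, c i • ![pdv 0 u x, pdv 1 u x, nrm u x] i) ⬝ᵥ z from by rw [hc]]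
    simp [Fin.sum_univ_three, add_dotProduct, smul_dotProduct, hPz 0, hPz 1,
      hNz, smul_eq_mul]
  rw [← dotProduct_self_eq_zero]
  exact hzz

end Geom2
section Calc1

variable {S : Set (Fin 2 → ℝ)} {x : Fin 2 → ℝ}

lemma pdv_comm (hS : IsOpen S) (hx : x ∈ S) {F : (Fin 2 → ℝ) → (Fin 3 → ℝ)}
    (hF : ContDiffOn ℝ ∞ F S) (a b : Fin 2) :
    pdv a (pdv b F) x = pdv b (pdv a F) x := by
  have hct : ContDiffAt ℝ ∞ F x := hF.contDiffAt (hS.mem_nhds hx)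
  have hd : DifferentiableAt ℝ (fderiv ℝ F) x :=
    (hct.fderiv_right (m := 1) (by norm_cast)).differentiableAt (by norm_cast)
  have hsym : IsSymmSndFDerivAt ℝ F x := hct.isSymmSndFDerivAt (by simp only [minSmoothness_of_isRCLikeNormedField]; norm_cast)
  have key : ∀ v w : Fin 2 → ℝ,
      fderiv ℝ (fun y => fderiv ℝ F y w) x v = fderiv ℝ (fderiv ℝ F) x v w := by
    intro v w
    rw [fderiv_clm_apply hd (differentiableAt_const w)]
    simp
  show fderiv ℝ (fun y => fderiv ℝ F y (Pi.single b 1)) x (Pi.single a 1)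
      = fderiv ℝ (fun y => fderiv ℝ F y (Pi.single a 1)) x (Pi.single b 1)
  rw [key, key]
  exact hsym _ _

lemma pds_comm (hS : IsOpen S) (hx : x ∈ S) {f : (Fin 2 → ℝ) → ℝ}
    (hf : ContDiffOn ℝ ∞ f S) (a b : Fin 2) :
    pds a (pds b f) x = pds b (pds a f) x := by
  have hct : ContDiffAt ℝ ∞ f x := hf.contDiffAt (hS.mem_nhds hx)
  have hd : DifferentiableAt ℝ (fderiv ℝ f) x :=
    (hct.fderiv_right (m := 1) (by norm_cast)).differentiableAt (by norm_cast)
  have hsym : IsSymmSndFDerivAt ℝ f x := hct.isSymmSndFDerivAt (by simp only [minSmoothness_of_isRCLikeNormedField]; norm_cast)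
  have key : ∀ v w : Fin 2 → ℝ,
      fderiv ℝ (fun y => fderiv ℝ f y w) x v = fderiv ℝ (fderiv ℝ f) x v w := by
    intro v w
    rw [fderiv_clm_apply hd (differentiableAt_const w)]
    simp
  show fderiv ℝ (fun y => fderiv ℝ f y (Pi.single b 1)) x (Pi.single a 1)
      = fderiv ℝ (fun y => fderiv ℝ f y (Pi.single a 1)) x (Pi.single b 1)
  rw [key, key]
  exact hsym _ _

end Calc1
section Layer5

variable {S : Set (Fin 2 → ℝ)} {u : (Fin 2 → ℝ) → (Fin 3 → ℝ)} {x : Fin 2 → ℝ}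

lemma pds_gmat (hS : IsOpen S) (hu : ContDiffOn ℝ ∞ u S) (hx : x ∈ S) (m i j : Fin 2) :
    pds m (fun y => gmat u y i j) x
      = pdv m (pdv i u) x ⬝ᵥ pdv j u x + pdv i u x ⬝ᵥ pdv m (pdv j u) x :=
  pds_dot (diffAt_of_smF hS (sm_pdv (i := i) hS hu) hx)
    (diffAt_of_smF hS (sm_pdv (i := j) hS hu) hx)

lemma Gam_eq (hS : IsOpen S) (hu : ContDiffOn ℝ ∞ u S) (hx : x ∈ S) (a i j : Fin 2) :
    Gam u x a i j = ∑ l, ginv u x a l * (pdv i (pdv j u) x ⬝ᵥ pdv l u x) := by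
  rw [Gam]
  rw [Finset.mul_sum]
  refine Finset.sum_congr rfl fun l _ => ?_
  rw [pds_gmat hS hu hx j i l, pds_gmat hS hu hx i j l, pds_gmat hS hu hx l i j]
  rw [pdv_comm hS hx hu j i, pdv_comm hS hx hu j l, pdv_comm hS hx hu i l]
  rw [dotProduct_comm (pdv i u x) (pdv l (pdv j u) x),
    dotProduct_comm (pdv j u x) (pdv l (pdv i u) x)]
  ring

lemma gauss (hS : IsOpen S) (hu : ContDiffOn ℝ ∞ u S)
    (himm : ∀ y ∈ S, LinearIndependent ℝ ![pdv 0 u y, pdv 1 u y]) (hx : x ∈ S) (i j : Fin 2) :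
    pdv i (pdv j u) x = sff u x i j • nrm u x + ∑ a, Gam u x a i j • pdv a u x := by
  have h := expand3 (himm x hx) (pdv i (pdv j u) x)
  have hs : pdv i (pdv j u) x ⬝ᵥ nrm u x = sff u x i j :=
    dotProduct_comm _ _
  rw [hs] at h
  have hc : ∀ a : Fin 2, (∑ b, ginv u x a b * (pdv i (pdv j u) x ⬝ᵥ pdv b u x))
      = Gam u x a i j := fun a => (Gam_eq hS hu hx a i j).symm
  calc pdv i (pdv j u) x
      = sff u x i j • nrm u x
        + ∑ a, (∑ b, ginv u x a b * (pdv i (pdv j u) x ⬝ᵥ pdv b u x)) • pdv a u x := h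
    _ = sff u x i j • nrm u x + ∑ a, Gam u x a i j • pdv a u x := by
        congr 1
        exact Finset.sum_congr rfl fun a _ => by rw [hc a]

lemma nrm_pdv_dot (hS : IsOpen S) (hu : ContDiffOn ℝ ∞ u S)
    (himm : ∀ y ∈ S, LinearIndependent ℝ ![pdv 0 u y, pdv 1 u y]) (hx : x ∈ S) (m k : Fin 2) :
    pdv m (nrm u) x ⬝ᵥ pdv k u x = - sff u x m k := by
  have hnrm := sm_nrm hS hu himm
  have hzero : pds m (fun y => nrm u y ⬝ᵥ pdv k u y) x = 0 := by
    rw [pds_congr hS hx (g := fun _ => (0:ℝ)) (fun y _ => nrm_dot_pdv k), pds_const]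
  rw [pds_dot (diffAt_of_smF hS hnrm hx) (diffAt_of_smF hS (sm_pdv hS hu) hx)] at hzero
  have : nrm u x ⬝ᵥ pdv m (pdv k u) x = sff u x m k := rfl
  linarith [hzero, this.symm.le]

lemma nrm_dot_pdv_nrm (hS : IsOpen S) (hu : ContDiffOn ℝ ∞ u S)
    (himm : ∀ y ∈ S, LinearIndependent ℝ ![pdv 0 u y, pdv 1 u y]) (hx : x ∈ S) (m : Fin 2) :
    nrm u x ⬝ᵥ pdv m (nrm u) x = 0 := by
  have hnrm := sm_nrm hS hu himm
  have hzero : pds m (fun y => nrm u y ⬝ᵥ nrm u y) x = 0 := by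
    rw [pds_congr hS hx (g := fun _ => (1:ℝ)) (fun y hy => nrm_dot_self (himm y hy)),
      pds_const]
  rw [pds_dot (diffAt_of_smF hS hnrm hx) (diffAt_of_smF hS hnrm hx)] at hzero
  rw [dotProduct_comm (pdv m (nrm u) x) (nrm u x)] at hzero
  linarith [hzero]

lemma wein (hS : IsOpen S) (hu : ContDiffOn ℝ ∞ u S)
    (himm : ∀ y ∈ S, LinearIndependent ℝ ![pdv 0 u y, pdv 1 u y]) (hx : x ∈ S) (m : Fin 2) :
    pdv m (nrm u) x = ∑ a, (∑ b, ginv u x a b * (- sff u x m b)) • pdv a u x := by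
  have h := expand3 (himm x hx) (pdv m (nrm u) x)
  have h0 : pdv m (nrm u) x ⬝ᵥ nrm u x = 0 := by
    rw [dotProduct_comm]; exact nrm_dot_pdv_nrm hS hu himm hx m
  rw [h0, zero_smul, zero_add] at h
  calc pdv m (nrm u) x
      = ∑ a, (∑ b, ginv u x a b * (pdv m (nrm u) x ⬝ᵥ pdv b u x)) • pdv a u x := h
    _ = _ := by
        refine Finset.sum_congr rfl fun a _ => ?_
        congr 1
        exact Finset.sum_congr rfl fun b _ => by rw [nrm_pdv_dot hS hu himm hx m b]

lemma third_sym (hS : IsOpen S) (hu : ContDiffOn ℝ ∞ u S) (hx : x ∈ S) (k i j : Fin 2) :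
    pdv k (pdv i (pdv j u)) x = pdv i (pdv j (pdv k u)) x := by
  have h1 : pdv k (pdv i (pdv j u)) x = pdv i (pdv k (pdv j u)) x :=
    pdv_comm hS hx (sm_pdv hS hu) k i
  rw [h1]
  refine pdv_congr hS hx fun y hy => ?_
  exact pdv_comm hS hy hu k j

lemma pds_sff (hS : IsOpen S) (hu : ContDiffOn ℝ ∞ u S)
    (himm : ∀ y ∈ S, LinearIndependent ℝ ![pdv 0 u y, pdv 1 u y]) (hx : x ∈ S) (k i j : Fin 2) :
    pds k (fun y => sff u y i j) x
      = pdv k (nrm u) x ⬝ᵥ pdv i (pdv j u) x + nrm u x ⬝ᵥ pdv k (pdv i (pdv j u)) x :=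
  pds_dot (diffAt_of_smF hS (sm_nrm hS hu himm) hx)
    (diffAt_of_smF hS (sm_pdv hS (sm_pdv hS hu)) hx)

lemma dkn_dot (hS : IsOpen S) (hu : ContDiffOn ℝ ∞ u S)
    (himm : ∀ y ∈ S, LinearIndependent ℝ ![pdv 0 u y, pdv 1 u y]) (hx : x ∈ S) (k i j : Fin 2) :
    pdv k (nrm u) x ⬝ᵥ pdv i (pdv j u) x = - ∑ l, Gam u x l i j * sff u x k l := by
  rw [gauss hS hu himm hx i j, dotProduct_add, dotProduct_smul]
  rw [show pdv k (nrm u) x ⬝ᵥ nrm u x = 0 from by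
    rw [dotProduct_comm]; exact nrm_dot_pdv_nrm hS hu himm hx k]
  simp only [Fin.sum_univ_two, dotProduct_add, dotProduct_smul, smul_eq_mul]
  rw [nrm_pdv_dot hS hu himm hx k 0, nrm_pdv_dot hS hu himm hx k 1]
  ring

lemma n_third (hS : IsOpen S) (hu : ContDiffOn ℝ ∞ u S)
    (himm : ∀ y ∈ S, LinearIndependent ℝ ![pdv 0 u y, pdv 1 u y]) (hx : x ∈ S) (k i j : Fin 2) :
    nrm u x ⬝ᵥ pdv i (pdv j (pdv k u)) x
      = pds k (fun y => sff u y i j) x + ∑ l, Gam u x l i j * sff u x k l := by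
  rw [← third_sym hS hu hx k i j]
  have := pds_sff hS hu himm hx k i j
  rw [dkn_dot hS hu himm hx k i j] at this
  linarith [this]

lemma nij (hS : IsOpen S) (hu : ContDiffOn ℝ ∞ u S)
    (himm : ∀ y ∈ S, LinearIndependent ℝ ![pdv 0 u y, pdv 1 u y]) (hx : x ∈ S) (i j : Fin 2) :
    nrm u x ⬝ᵥ pdv i (pdv j (nrm u)) x
      = - ∑ a, ∑ b, ginv u x a b * sff u x i b * sff u x j a := by
  have hnrm := sm_nrm hS hu himm
  have hzero : pds i (fun y => nrm u y ⬝ᵥ pdv j (nrm u) y) x = 0 := by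
    rw [pds_congr hS hx (g := fun _ => (0:ℝ))
      (fun y hy => nrm_dot_pdv_nrm hS hu himm hy j), pds_const]
  rw [pds_dot (diffAt_of_smF hS hnrm hx) (diffAt_of_smF hS (sm_pdv hS hnrm) hx)] at hzero
  have hdd : pdv i (nrm u) x ⬝ᵥ pdv j (nrm u) x
      = ∑ a, ∑ b, ginv u x a b * sff u x i b * sff u x j a := by
    rw [wein hS hu himm hx i]
    simp only [Fin.sum_univ_two, add_dotProduct, smul_dotProduct, smul_eq_mul]
    rw [show pdv 0 u x ⬝ᵥ pdv j (nrm u) x = - sff u x j 0 from by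
      rw [dotProduct_comm]; exact nrm_pdv_dot hS hu himm hx j 0]
    rw [show pdv 1 u x ⬝ᵥ pdv j (nrm u) x = - sff u x j 1 from by
      rw [dotProduct_comm]; exact nrm_pdv_dot hS hu himm hx j 1]
    ring
  rw [hdd] at hzero
  linarith [hzero]

lemma sff_symm (hS : IsOpen S) (hu : ContDiffOn ℝ ∞ u S) (hx : x ∈ S) (i j : Fin 2) :
    sff u x i j = sff u x j i := by
  rw [sff, sff, pdv_comm hS hx hu i j]

lemma Gam_symm (hS : IsOpen S) (hu : ContDiffOn ℝ ∞ u S) (hx : x ∈ S) (a b c : Fin 2) :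
    Gam u x a b c = Gam u x a c b := by
  rw [Gam_eq hS hu hx a b c, Gam_eq hS hu hx a c b, pdv_comm hS hx hu b c]

end Layer5

/-- Let `u` be a smooth immersion on an open `S ⊆ ℝ²`, let `V¹, V², Φ` be
smooth on `S` and `τ = V^k ∂_k u + Φ n`. Then on `S`, for all `i, j`:
`n·(∂ᵢ∂ⱼτ − Γ^m_{ij}∂_mτ) = V^k(∂_k h_{ij} − Γ^l_{ki}h_{lj} − Γ^l_{kj}h_{il})
 + h_{ik}(∂ⱼV^k + Γ^k_{jl}V^l) + h_{jk}(∂ᵢV^k + Γ^k_{il}V^l)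
 + ∂ᵢ∂ⱼΦ − Γ^k_{ij}∂_kΦ − Φ g^{kl}h_{ik}h_{jl}`. -/
theorem n_hess_tau_formula
    (S : Set (Fin 2 → ℝ)) (hS : IsOpen S)
    (u : (Fin 2 → ℝ) → (Fin 3 → ℝ)) (hu : ContDiffOn ℝ (⊤ : ℕ∞) u S)
    (himm : ∀ x ∈ S, LinearIndependent ℝ ![pdv 0 u x, pdv 1 u x])
    (V : Fin 2 → (Fin 2 → ℝ) → ℝ) (hV : ∀ k, ContDiffOn ℝ (⊤ : ℕ∞) (V k) S)
    (Φ : (Fin 2 → ℝ) → ℝ) (hΦ : ContDiffOn ℝ (⊤ : ℕ∞) Φ S)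
    (τ : (Fin 2 → ℝ) → (Fin 3 → ℝ))
    (hτ : ∀ x, τ x = (∑ k, V k x • pdv k u x) + Φ x • nrm u x) :
    ∀ x ∈ S, ∀ i j : Fin 2,
      nrm u x ⬝ᵥ (pdv i (pdv j τ) x - ∑ m, Gam u x m i j • pdv m τ x)
        = (∑ k, V k x * (pds k (fun y => sff u y i j) x
              - (∑ l, Gam u x l k i * sff u x l j) - ∑ l, Gam u x l k j * sff u x i l))
          + (∑ k, sff u x i k * (pds j (V k) x + ∑ l, Gam u x k j l * V l x))
          + (∑ k, sff u x j k * (pds i (V k) x + ∑ l, Gam u x k i l * V l x))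
          + pds i (pds j Φ) x - (∑ k, Gam u x k i j * pds k Φ x)
          - Φ x * ∑ k, ∑ l, ginv u x k l * sff u x i k * sff u x j l := by
  intro x hx i j
  have hu' : ContDiffOn ℝ ∞ u S := hu.of_le (by simp)
  have hV' : ∀ k, ContDiffOn ℝ ∞ (V k) S := fun k => (hV k).of_le (by simp)
  have hΦ' : ContDiffOn ℝ ∞ Φ S := hΦ.of_le (by simp)
  have hnrm : ContDiffOn ℝ ∞ (nrm u) S := sm_nrm hS hu' himm
  have hτfun : τ = fun y => (∑ k, V k y • pdv k u y) + Φ y • nrm u y := funext hτ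
  -- differentiability helpers
  have dV : ∀ (k : Fin 2), ∀ y ∈ S, DifferentiableAt ℝ (V k) y :=
    fun k y hy => diffAt_of_sm hS (hV' k) hy
  have dΦ : ∀ y ∈ S, DifferentiableAt ℝ Φ y := fun y hy => diffAt_of_sm hS hΦ' hy
  have dP : ∀ (k : Fin 2), ∀ y ∈ S, DifferentiableAt ℝ (pdv k u) y :=
    fun k y hy => diffAt_of_smF hS (sm_pdv hS hu') hy
  have dPP : ∀ (m k : Fin 2), ∀ y ∈ S, DifferentiableAt ℝ (pdv m (pdv k u)) y :=
    fun m k y hy => diffAt_of_smF hS (sm_pdv hS (sm_pdv hS hu')) hy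
  have dN : ∀ y ∈ S, DifferentiableAt ℝ (nrm u) y := fun y hy => diffAt_of_smF hS hnrm hy
  have dNm : ∀ (m : Fin 2), ∀ y ∈ S, DifferentiableAt ℝ (pdv m (nrm u)) y :=
    fun m y hy => diffAt_of_smF hS (sm_pdv hS hnrm) hy
  have dpV : ∀ (m k : Fin 2), ∀ y ∈ S, DifferentiableAt ℝ (pds m (V k)) y :=
    fun m k y hy => diffAt_of_sm hS (sm_pds hS (hV' k)) hy
  have dpΦ : ∀ (m : Fin 2), ∀ y ∈ S, DifferentiableAt ℝ (pds m Φ) y :=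
    fun m y hy => diffAt_of_sm hS (sm_pds hS hΦ') hy
  -- first derivative of τ on S
  have hEτ : ∀ (m : Fin 2), ∀ y ∈ S, pdv m τ y =
      (∑ k, (pds m (V k) y • pdv k u y + V k y • pdv m (pdv k u) y))
        + (pds m Φ y • nrm u y + Φ y • pdv m (nrm u) y) := by
    intro m y hy
    rw [hτfun]
    rw [pdv_add (F := fun y => ∑ k, V k y • pdv k u y) (G := fun y => Φ y • nrm u y)
      (DifferentiableAt.fun_sum fun k _ => (dV k y hy).smul (dP k y hy))
      ((dΦ y hy).smul (dN y hy))]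
    rw [pdv_sum Finset.univ (fun k y => V k y • pdv k u y) (fun k _ => (dV k y hy).smul (dP k y hy))]
    rw [pdv_smul (dΦ y hy) (dN y hy)]
    congr 1
    exact Finset.sum_congr rfl fun k _ => pdv_smul (dV k y hy) (dP k y hy)
  -- normal component of first derivative
  have nτ : ∀ (m : Fin 2), nrm u x ⬝ᵥ pdv m τ x
      = V 0 x * sff u x m 0 + V 1 x * sff u x m 1 + pds m Φ x := by
    intro m
    rw [hEτ m x hx]
    simp only [Fin.sum_univ_two, dotProduct_add, dotProduct_smul, smul_eq_mul]
    rw [nrm_dot_pdv (u := u) (x := x) 0, nrm_dot_pdv (u := u) (x := x) 1,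
      nrm_dot_self (himm x hx), nrm_dot_pdv_nrm hS hu' himm hx m]
    rw [show nrm u x ⬝ᵥ pdv m (pdv 0 u) x = sff u x m 0 from rfl]
    rw [show nrm u x ⬝ᵥ pdv m (pdv 1 u) x = sff u x m 1 from rfl]
    ring
  -- second derivative of τ at x
  have hE2 : pdv i (pdv j τ) x =
      (∑ k, ((pds i (pds j (V k)) x • pdv k u x + pds j (V k) x • pdv i (pdv k u) x)
        + (pds i (V k) x • pdv j (pdv k u) x + V k x • pdv i (pdv j (pdv k u)) x)))
      + ((pds i (pds j Φ) x • nrm u x + pds j Φ x • pdv i (nrm u) x)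
        + (pds i Φ x • pdv j (nrm u) x + Φ x • pdv i (pdv j (nrm u)) x)) := by
    rw [pdv_congr hS hx (hEτ j)]
    rw [pdv_add
      (F := fun y => ∑ k, (pds j (V k) y • pdv k u y + V k y • pdv j (pdv k u) y))
      (G := fun y => pds j Φ y • nrm u y + Φ y • pdv j (nrm u) y)
      (DifferentiableAt.fun_sum fun k _ =>
        ((dpV j k x hx).smul (dP k x hx)).add ((dV k x hx).smul (dPP j k x hx)))
      (((dpΦ j x hx).smul (dN x hx)).add ((dΦ x hx).smul (dNm j x hx)))]
    rw [pdv_sum Finset.univ (fun k y => pds j (V k) y • pdv k u y + V k y • pdv j (pdv k u) y)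
      (fun k _ =>
      ((dpV j k x hx).smul (dP k x hx)).add ((dV k x hx).smul (dPP j k x hx)))]
    rw [pdv_add (F := fun y => pds j Φ y • nrm u y) (G := fun y => Φ y • pdv j (nrm u) y)
      ((dpΦ j x hx).smul (dN x hx)) ((dΦ x hx).smul (dNm j x hx))]
    rw [pdv_smul (dpΦ j x hx) (dN x hx), pdv_smul (dΦ x hx) (dNm j x hx)]
    congr 1
    refine Finset.sum_congr rfl fun k _ => ?_
    rw [pdv_add (F := fun y => pds j (V k) y • pdv k u y) (G := fun y => V k y • pdv j (pdv k u) y)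
      ((dpV j k x hx).smul (dP k x hx)) ((dV k x hx).smul (dPP j k x hx))]
    rw [pdv_smul (dpV j k x hx) (dP k x hx), pdv_smul (dV k x hx) (dPP j k x hx)]
  -- assemble
  rw [dotProduct_sub, hE2]
  simp only [Fin.sum_univ_two, dotProduct_add, dotProduct_smul, smul_eq_mul]
  rw [nrm_dot_pdv (u := u) (x := x) 0, nrm_dot_pdv (u := u) (x := x) 1,
    nrm_dot_self (himm x hx),
    nrm_dot_pdv_nrm hS hu' himm hx i, nrm_dot_pdv_nrm hS hu' himm hx j,
    nij hS hu' himm hx i j,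
    n_third hS hu' himm hx 0 i j, n_third hS hu' himm hx 1 i j]
  rw [show nrm u x ⬝ᵥ pdv i (pdv 0 u) x = sff u x i 0 from rfl,
    show nrm u x ⬝ᵥ pdv i (pdv 1 u) x = sff u x i 1 from rfl,
    show nrm u x ⬝ᵥ pdv j (pdv 0 u) x = sff u x j 0 from rfl,
    show nrm u x ⬝ᵥ pdv j (pdv 1 u) x = sff u x j 1 from rfl]
  rw [nτ 0, nτ 1]
  simp only [Fin.sum_univ_two]
  simp only [show sff u x j 0 = sff u x 0 j from sff_symm hS hu' hx j 0,
    show sff u x j 1 = sff u x 1 j from sff_symm hS hu' hx j 1,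
    show sff u x i 0 = sff u x 0 i from sff_symm hS hu' hx i 0,
    show sff u x i 1 = sff u x 1 i from sff_symm hS hu' hx i 1,
    show sff u x 1 0 = sff u x 0 1 from sff_symm hS hu' hx 1 0,
    show ginv u x 1 0 = ginv u x 0 1 from ginv_symm (u := u) (x := x) 1 0,
    show Gam u x 0 j 0 = Gam u x 0 0 j from Gam_symm hS hu' hx 0 j 0,
    show Gam u x 0 j 1 = Gam u x 0 1 j from Gam_symm hS hu' hx 0 j 1,
    show Gam u x 1 j 0 = Gam u x 1 0 j from Gam_symm hS hu' hx 1 j 0,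
    show Gam u x 1 j 1 = Gam u x 1 1 j from Gam_symm hS hu' hx 1 j 1,
    show Gam u x 0 i 0 = Gam u x 0 0 i from Gam_symm hS hu' hx 0 i 0,
    show Gam u x 0 i 1 = Gam u x 0 1 i from Gam_symm hS hu' hx 0 i 1,
    show Gam u x 1 i 0 = Gam u x 1 0 i from Gam_symm hS hu' hx 1 i 0,
    show Gam u x 1 i 1 = Gam u x 1 1 i from Gam_symm hS hu' hx 1 i 1]
  ring
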